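/- arXiv:2408.13650 — 5 statements merged into one kernel-verified Lean document; each statement's English description precedes it below -/
import Mathlib

section
/- Let r, s ≥ 3 be integers, not both equal to 4, and let μ, ν be coprime positive integers. Then for every modulus q ≥ 1 and every residue a with gcd(a, q) = 1, there are infinitely many primes p ≡ a (mod q) such that p is NOT expressible as μ·T(r,m) + ν·T(s,n) with m, n positive integers. -/
/-- The m-th r-gonal number: T(r,m) = (r-2)·m(m-1)/2 + m. Since m(m-1) is always
even, the integer division is exact. -/
def polygonalNumber (r m : ℤ) : ℤ := (r - 2) * (m * (m - 1) / 2) + m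


open ZMod in
lemma aux_jacobi (D : ℕ) (hD : 0 < D) : jacobiSym (-(D : ℤ)) (4 * D - 1) = -1 := by
  set n : ℕ := 4 * D - 1 with hn
  have hn4 : n % 4 = 3 := by omega
  have hodd : Odd n := by rw [Nat.odd_iff]; omega
  have hχ : χ₄ n = -1 := by rw [χ₄_nat_mod_four, hn4]; decide
  rw [jacobiSym.neg _ hodd, hχ]
  suffices h : jacobiSym (D : ℤ) n = 1 by rw [h]; ring
  -- split off the 2-part
  obtain ⟨e, m, hm2, hem⟩ : ∃ e m : ℕ, ¬ 2 ∣ m ∧ 2 ^ e * m = D :=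
    ⟨D.factorization 2, D / 2 ^ D.factorization 2,
      Nat.not_dvd_ordCompl Nat.prime_two hD.ne',
      Nat.ordProj_mul_ordCompl_eq_self D 2⟩
  have hmodd : Odd m := Nat.odd_iff.mpr (Nat.two_dvd_ne_zero.mp hm2 ▸ by omega)
  have hmdvd : m ∣ D := ⟨2 ^ e, by rw [← hem]; ring⟩
  have hmpos : 0 < m := Nat.pos_of_dvd_of_pos hmdvd hD
  have hsplit : ((D : ℤ)) = (2 : ℤ) ^ e * (m : ℤ) := by exact_mod_cast hem.symm
  rw [hsplit, jacobiSym.mul_left, jacobiSym.pow_left]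
  have h2 : jacobiSym (2 : ℤ) n ^ e = 1 := by
    rcases Nat.eq_zero_or_pos e with he | he
    · rw [he, pow_zero]
    · have h2D : 2 ∣ D := by
        rw [← hem]; exact Dvd.dvd.mul_right (dvd_pow_self 2 he.ne') m
      have hn8 : n % 8 = 7 := by omega
      rw [jacobiSym.at_two hodd, χ₈_nat_mod_eight, hn8]
      norm_num
  rw [h2, one_mul]
  -- now J(m | n) = 1 via reciprocity and n ≡ -1 mod m
  have hnm : jacobiSym (n : ℤ) m = χ₄ m := by
    have : ((n : ℤ)) % m = (-1) % m := by
      have hdvd : (m : ℤ) ∣ (n : ℤ) - (-1) := by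
        have h4D : (m : ℤ) ∣ 4 * (D : ℤ) := by
          exact_mod_cast hmdvd.mul_left 4
        have heq : ((n : ℤ)) - (-1) = 4 * D := by omega
        rw [heq]; exact h4D
      exact (Int.modEq_iff_dvd.mpr hdvd).symm
    rw [jacobiSym.mod_left, this, ← jacobiSym.mod_left]
    exact jacobiSym.at_neg_one hmodd
  have hm4 : m % 4 = 1 ∨ m % 4 = 3 := by omega
  rcases hm4 with hm4 | hm4
  · rw [jacobiSym.quadratic_reciprocity_one_mod_four hm4 hodd, hnm,
      χ₄_nat_mod_four, hm4]; decide
  · rw [jacobiSym.quadratic_reciprocity_three_mod_four hm4 hn4, hnm,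
      χ₄_nat_mod_four, hm4]; decide



lemma exists_special_prime (D : ℤ) (hD : 0 < D) (N : ℕ) :
    ∃ ℓ : ℕ, ℓ.Prime ∧ N < ℓ ∧ ¬ IsSquare ((-D : ℤ) : ZMod ℓ) := by
  set Dn : ℕ := D.toNat with hDn
  have hDnD : (Dn : ℤ) = D := Int.toNat_of_nonneg hD.le
  have hDn0 : 0 < Dn := by omega
  set M : ℕ := 4 * Dn with hM
  haveI : NeZero M := ⟨by omega⟩
  set n₀ : ℕ := M - 1 with hn₀
  have hco : n₀.Coprime M := by
    have hMeq : M = 1 + n₀ := by omega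
    rw [hMeq, Nat.coprime_add_self_right]
    exact Nat.coprime_one_right _
  have hunit : IsUnit ((n₀ : ℕ) : ZMod M) := (ZMod.isUnit_iff_coprime _ _).mpr hco
  obtain ⟨ℓ, hℓmem, hℓN⟩ :=
    (Nat.infinite_setOfPred_prime_and_eq_mod hunit).exists_gt N
  obtain ⟨hℓp, hℓmod⟩ := hℓmem
  have hmod : ℓ ≡ n₀ [MOD M] := (ZMod.natCast_eq_natCast_iff _ _ _).mp hℓmod
  have hmodM : ℓ % M = n₀ % M := hmod
  have hn₀M : n₀ % M = n₀ := Nat.mod_eq_of_lt (by omega)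
  have hc : 4 * (Dn * (ℓ / M)) + n₀ = ℓ := by
    have hdm := Nat.div_add_mod ℓ M
    rw [hmodM, hn₀M] at hdm
    have h4 : 4 * (Dn * (ℓ / M)) = M * (ℓ / M) := by rw [hM]; ring
    omega
  have hℓodd : Odd ℓ := by
    rw [Nat.odd_iff]
    omega
  have habs : (-D).natAbs = Dn := by omega
  have hJ : jacobiSym (-D) ℓ = -1 := by
    have h1 := jacobiSym.mod_right (-D) hℓodd
    have h2 := jacobiSym.mod_right (-D) (by rw [Nat.odd_iff]; omega : Odd n₀)
    rw [habs] at h1 h2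
    rw [h1, hmodM, ← h2]
    have := aux_jacobi Dn hDn0
    rw [hDnD] at this
    simpa [hn₀, hM] using this
  exact ⟨ℓ, hℓp, hℓN, ZMod.nonsquare_of_jacobiSym_eq_neg_one hJ⟩



lemma poly_sq (r m : ℤ) :
    8 * (r - 2) * polygonalNumber r m + (r - 4) ^ 2 = (2 * (r - 2) * m - (r - 4)) ^ 2 := by
  obtain ⟨k, hk⟩ : Even (m * (m - 1)) := by
    have h := Int.even_mul_succ_self (m - 1)
    simpa [mul_comm] using h
  have hdiv : m * (m - 1) / 2 = k := by omega
  unfold polygonalNumber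
  rw [hdiv]
  linear_combination (-4 * (r - 2) ^ 2) * hk

/-- For r, s ≥ 3 not both 4 and coprime positive integers μ, ν,
every admissible residue class a mod q contains infinitely many primes NOT of
the form μ·T(r,m) + ν·T(s,n). -/
theorem infinitely_many_primes_in_AP_not_sum_polygonal (r s : ℤ) (hr : 3 ≤ r) (hs : 3 ≤ s)
    (h4 : ¬(r = 4 ∧ s = 4))
    (μ ν : ℤ) (hμ : 0 < μ) (hν : 0 < ν) (hμν : IsCoprime μ ν)
    (q a : ℕ) (hq : 1 ≤ q) (ha : Nat.Coprime a q) :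
    {p : ℕ | p.Prime ∧ p % q = a % q ∧
      ¬ ∃ m n : ℤ, 0 < m ∧ 0 < n ∧
        (p : ℤ) = μ * polygonalNumber r m + ν * polygonalNumber s n}.Infinite := by
  classical
  set A : ℤ := r - 2 with hA
  set B : ℤ := s - 2 with hB
  have hA1 : 1 ≤ A := by omega
  have hB1 : 1 ≤ B := by omega
  set C : ℤ := μ * B * (r - 4) ^ 2 + ν * A * (s - 4) ^ 2 with hC
  have hC0 : 0 < C := by
    have hterm1 : 0 ≤ μ * B * (r - 4) ^ 2 :=
      mul_nonneg (mul_nonneg hμ.le (by omega)) (sq_nonneg _)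
    have hterm2 : 0 ≤ ν * A * (s - 4) ^ 2 :=
      mul_nonneg (mul_nonneg hν.le (by omega)) (sq_nonneg _)
    rcases not_and_or.mp h4 with h | h
    · have h1 : 1 ≤ (r - 4) ^ 2 := by
        rcases (by omega : r - 4 ≤ -1 ∨ 1 ≤ r - 4) with h' | h' <;> nlinarith
      have : 1 * 1 * 1 ≤ μ * B * (r - 4) ^ 2 := by
        apply mul_le_mul (mul_le_mul hμ hB1 one_pos.le (by omega)) h1 one_pos.le
        nlinarith
      nlinarith
    · have h1 : 1 ≤ (s - 4) ^ 2 := by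
        rcases (by omega : s - 4 ≤ -1 ∨ 1 ≤ s - 4) with h' | h' <;> nlinarith
      have : 1 * 1 * 1 ≤ ν * A * (s - 4) ^ 2 := by
        apply mul_le_mul (mul_le_mul hν hA1 one_pos.le (by omega)) h1 one_pos.le
        nlinarith
      nlinarith
  set D : ℤ := μ * ν * A * B with hD
  have hD0 : 0 < D := by
    apply mul_pos (mul_pos (mul_pos hμ hν) (by omega)) (by omega)
  -- choose the auxiliary prime ℓ
  obtain ⟨ℓ, hℓp, hℓN, hℓns⟩ := exists_special_prime D hD0 (q + C.toNat)
  haveI : Fact ℓ.Prime := ⟨hℓp⟩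
  have hℓ2 : 2 ≤ ℓ := hℓp.two_le
  have hℓ2' : ℓ ≠ 2 := by
    rintro rfl
    exact hℓns ((by intro x; fin_cases x; exacts [⟨0, rfl⟩, ⟨1, rfl⟩] : ∀ x : ZMod 2, IsSquare x) _)
  have hℓD : ¬ ((ℓ : ℤ) ∣ D) := by
    intro h
    apply hℓns
    have : ((-D : ℤ) : ZMod ℓ) = 0 := by
      rw [ZMod.intCast_zmod_eq_zero_iff_dvd]
      exact (dvd_neg.mpr h)
    rw [this]
    exact ⟨0, (mul_zero 0).symm⟩
  have hℓμ : ¬ ((ℓ : ℤ) ∣ μ) := fun h => hℓD (h.trans ⟨ν * A * B, by rw [hD]; ring⟩)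
  have hℓν : ¬ ((ℓ : ℤ) ∣ ν) := fun h => hℓD (h.trans ⟨μ * A * B, by rw [hD]; ring⟩)
  have hℓA : ¬ ((ℓ : ℤ) ∣ A) := fun h => hℓD (h.trans ⟨μ * ν * B, by rw [hD]; ring⟩)
  have hℓB : ¬ ((ℓ : ℤ) ∣ B) := fun h => hℓD (h.trans ⟨μ * ν * A, by rw [hD]; ring⟩)
  -- natural number versions
  set An : ℕ := A.toNat with hAn
  set Bn : ℕ := B.toNat with hBn
  set Cn : ℕ := C.toNat with hCn
  have hAnA : (An : ℤ) = A := Int.toNat_of_nonneg (by omega)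
  have hBnB : (Bn : ℤ) = B := Int.toNat_of_nonneg (by omega)
  have hCnC : (Cn : ℤ) = C := Int.toNat_of_nonneg hC0.le
  have hCnℓ : Cn < ℓ := by omega
  have hqℓ : q < ℓ := by omega
  set L : ℕ := ℓ ^ 2 with hL
  haveI : NeZero L := ⟨pow_ne_zero 2 hℓp.pos.ne'⟩
  haveI : NeZero (q * L) := ⟨Nat.mul_ne_zero (by omega) (pow_ne_zero 2 hℓp.pos.ne')⟩
  -- the unit u = 8 A B  in ZMod L
  have h8AB : Nat.Coprime (8 * An * Bn) ℓ := by
    rw [Nat.coprime_comm, hℓp.coprime_iff_not_dvd]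
    intro h
    rcases (Nat.Prime.dvd_mul hℓp).mp h with h' | h'
    · rcases (Nat.Prime.dvd_mul hℓp).mp h' with h'' | h''
      · rw [(by norm_num : (8 : ℕ) = 2 ^ 3)] at h''
        have h3 : ℓ ∣ 2 := hℓp.dvd_of_dvd_pow h''
        have h5 := Nat.le_of_dvd (by norm_num) h3
        omega
      · exact hℓA (by rw [← hAnA]; exact_mod_cast Int.natCast_dvd_natCast.mpr h'')
    · exact hℓB (by rw [← hBnB]; exact_mod_cast Int.natCast_dvd_natCast.mpr h')
  set u : ZMod L := ((8 * An * Bn : ℕ) : ZMod L) with hu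
  have huu : IsUnit u := (ZMod.isUnit_iff_coprime _ _).mpr (h8AB.pow_right 2)
  set v : ZMod L := ↑(huu.unit⁻¹) with hv
  have hvu : v * u = 1 := by
    rw [hv]
    have := huu.unit.inv_mul
    rwa [IsUnit.unit_spec] at this
  -- the residue t mod ℓ²
  set c : ℕ := ℓ - Cn with hc
  have hcCn : c + Cn = ℓ := by omega
  have hc0 : 0 < c := by omega
  have hccop : Nat.Coprime c L := by
    apply Nat.Coprime.pow_right
    rw [Nat.coprime_comm, hℓp.coprime_iff_not_dvd]
    exact fun h => absurd (Nat.le_of_dvd hc0 h) (by omega)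
  set t : ZMod L := v * (c : ZMod L) with ht
  have htu : IsUnit t :=
    (huu.unit⁻¹.isUnit).mul ((ZMod.isUnit_iff_coprime _ _).mpr hccop)
  have hkey : u * t + ((C : ℤ) : ZMod L) = ((ℓ : ℕ) : ZMod L) := by
    have h1 : u * t = (c : ZMod L) := by
      rw [ht, ← mul_assoc, mul_comm u v, hvu, one_mul]
    rw [h1]
    have h2 : ((C : ℤ) : ZMod L) = ((Cn : ℕ) : ZMod L) := by
      rw [← hCnC]; push_cast; ring
    rw [h2, ← Nat.cast_add, hcCn]
  -- combine with the class a mod q via CRT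
  have hqL : Nat.Coprime q L := by
    apply Nat.Coprime.pow_right
    rw [Nat.coprime_comm, hℓp.coprime_iff_not_dvd]
    exact fun h => absurd (Nat.le_of_dvd (by omega) h) (by omega)
  obtain ⟨b, hb1, hb2⟩ := Nat.chineseRemainder hqL a t.val
  have htval : Nat.Coprime t.val L := by
    have := ZMod.val_coe_unit_coprime htu.unit
    rwa [IsUnit.unit_spec] at this
  have hbq : Nat.Coprime b q := by
    have h1 : Nat.gcd q b = Nat.gcd q a := by
      rw [Nat.gcd_rec q b, Nat.gcd_rec q a, hb1]
    have := ha
    unfold Nat.Coprime at *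
    rw [Nat.gcd_comm, h1, Nat.gcd_comm]
    exact this
  have hbL : Nat.Coprime b L := by
    have h1 : Nat.gcd L b = Nat.gcd L t.val := by
      rw [Nat.gcd_rec L b, Nat.gcd_rec L t.val, hb2]
    unfold Nat.Coprime at *
    rw [Nat.gcd_comm, h1, Nat.gcd_comm]
    exact htval
  have hbunit : IsUnit ((b : ℕ) : ZMod (q * L)) :=
    (ZMod.isUnit_iff_coprime _ _).mpr (Nat.Coprime.mul_right hbq hbL)
  apply Set.Infinite.mono _ (Nat.infinite_setOfPred_prime_and_eq_mod hbunit)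
  rintro p ⟨hp, hpmod⟩
  have hmodeq : p ≡ b [MOD q * L] := (ZMod.natCast_eq_natCast_iff _ _ _).mp hpmod
  refine ⟨hp, ?_, ?_⟩
  · have h1 : p ≡ b [MOD q] := hmodeq.of_dvd (dvd_mul_right q L)
    exact h1.trans hb1
  · rintro ⟨m, n, -, -, hpeq⟩
    set x : ℤ := 2 * A * m - (r - 4) with hx
    set y : ℤ := 2 * B * n - (s - 4) with hy
    have hE : 8 * A * B * (p : ℤ) + C = μ * B * x ^ 2 + ν * A * y ^ 2 := by
      have h1 := poly_sq r m
      have h2 := poly_sq s n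
      rw [hx, hy, hA, hB, hC]
      linear_combination (μ * B) * h1 + (ν * A) * h2 + (8 * A * B) * hpeq
    -- reduce mod L = ℓ²
    have hpt : ((p : ℕ) : ZMod L) = t := by
      have h1 : p ≡ t.val [MOD L] := (hmodeq.of_dvd (dvd_mul_left L q)).trans hb2
      have h2 : ((p : ℕ) : ZMod L) = ((t.val : ℕ) : ZMod L) :=
        (ZMod.natCast_eq_natCast_iff _ _ _).mpr h1
      rw [h2, ZMod.natCast_rightInverse t]
    have hEL : ((μ * B * x ^ 2 + ν * A * y ^ 2 - ℓ : ℤ) : ZMod L) = 0 := by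
      have h1 : ((μ * B * x ^ 2 + ν * A * y ^ 2 : ℤ) : ZMod L) = ((ℓ : ℕ) : ZMod L) := by
        rw [← hE]
        push_cast
        rw [← hkey]
        have h8 : ((8 : ZMod L) * (A : ℤ) * (B : ℤ) : ZMod L) = u := by
          rw [hu, ← hAnA, ← hBnB]; push_cast; ring
        have hp' : (((p : ℕ) : ℤ) : ZMod L) = t := by push_cast; exact_mod_cast hpt
        push_cast at h8 hp' ⊢
        rw [← h8, ← hp']
      push_cast at h1 ⊢
      simp [h1]
    have hdvdL : ((L : ℕ) : ℤ) ∣ (μ * B * x ^ 2 + ν * A * y ^ 2 - ℓ) :=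
      (ZMod.intCast_zmod_eq_zero_iff_dvd _ _).mp hEL
    have hℓdvdL : ((ℓ : ℕ) : ℤ) ∣ ((L : ℕ) : ℤ) := by
      rw [hL]; push_cast; exact ⟨ℓ, by ring⟩
    have hdvdℓ : ((ℓ : ℕ) : ℤ) ∣ (μ * B * x ^ 2 + ν * A * y ^ 2) := by
      have h1 := hℓdvdL.trans hdvdL
      have h2 : (μ * B * x ^ 2 + ν * A * y ^ 2 : ℤ)
          = (μ * B * x ^ 2 + ν * A * y ^ 2 - ℓ) + ℓ := by ring
      rw [h2]
      exact dvd_add h1 (dvd_refl _)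
    -- work in the field ZMod ℓ
    have hF0 : ((μ : ℤ) : ZMod ℓ) * ((B : ℤ) : ZMod ℓ) * ((x : ℤ) : ZMod ℓ) ^ 2
        + ((ν : ℤ) : ZMod ℓ) * ((A : ℤ) : ZMod ℓ) * ((y : ℤ) : ZMod ℓ) ^ 2 = 0 := by
      have h1 : ((μ * B * x ^ 2 + ν * A * y ^ 2 : ℤ) : ZMod ℓ) = 0 :=
        (ZMod.intCast_zmod_eq_zero_iff_dvd _ _).mpr hdvdℓ
      push_cast at h1
      linear_combination h1
    have ha1 : ((μ : ℤ) : ZMod ℓ) * ((B : ℤ) : ZMod ℓ) ≠ 0 := by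
      apply mul_ne_zero <;>
        · intro h
          rw [ZMod.intCast_zmod_eq_zero_iff_dvd] at h
          first | exact hℓμ h | exact hℓB h
    have ha2 : ((ν : ℤ) : ZMod ℓ) * ((A : ℤ) : ZMod ℓ) ≠ 0 := by
      apply mul_ne_zero <;>
        · intro h
          rw [ZMod.intCast_zmod_eq_zero_iff_dvd] at h
          first | exact hℓν h | exact hℓA h
    have hxy : ((x : ℤ) : ZMod ℓ) = 0 ∧ ((y : ℤ) : ZMod ℓ) = 0 := by
      by_cases hY : ((y : ℤ) : ZMod ℓ) = 0
      · constructor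
        · have h1 : ((μ : ℤ) : ZMod ℓ) * ((B : ℤ) : ZMod ℓ) * ((x : ℤ) : ZMod ℓ) ^ 2 = 0 := by
            rw [hY] at hF0; linear_combination hF0
          have h2 := mul_eq_zero.mp h1
          rcases h2 with h2 | h2
          · exact absurd h2 ha1
          · exact pow_eq_zero_iff (by norm_num) |>.mp h2
        · exact hY
      · exfalso
        apply hℓns
        refine ⟨((μ : ℤ) : ZMod ℓ) * ((B : ℤ) : ZMod ℓ) * ((x : ℤ) : ZMod ℓ)
            * (((y : ℤ) : ZMod ℓ))⁻¹, ?_⟩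
        have hDcast : ((-D : ℤ) : ZMod ℓ)
            = -(((μ : ℤ) : ZMod ℓ) * ((ν : ℤ) : ZMod ℓ)
              * ((A : ℤ) : ZMod ℓ) * ((B : ℤ) : ZMod ℓ)) := by
          rw [hD]; push_cast; ring
        rw [hDcast]
        field_simp
        linear_combination (-(((μ : ℤ) : ZMod ℓ) * ((B : ℤ) : ZMod ℓ))) * hF0
    obtain ⟨hX0, hY0⟩ := hxy
    have hxdvd : ((ℓ : ℕ) : ℤ) ∣ x := (ZMod.intCast_zmod_eq_zero_iff_dvd _ _).mp hX0
    have hydvd : ((ℓ : ℕ) : ℤ) ∣ y := (ZMod.intCast_zmod_eq_zero_iff_dvd _ _).mp hY0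
    have hL2 : ((L : ℕ) : ℤ) ∣ (μ * B * x ^ 2 + ν * A * y ^ 2) := by
      obtain ⟨x', hx'⟩ := hxdvd
      obtain ⟨y', hy'⟩ := hydvd
      refine ⟨μ * B * x' ^ 2 + ν * A * y' ^ 2, ?_⟩
      rw [hx', hy', hL]; push_cast; ring
    have hLℓ : ((L : ℕ) : ℤ) ∣ (ℓ : ℤ) := by
      have h9 := dvd_sub hL2 hdvdL
      have h10 : (μ * B * x ^ 2 + ν * A * y ^ 2) - (μ * B * x ^ 2 + ν * A * y ^ 2 - ↑ℓ)
          = (ℓ : ℤ) := by ring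
      rwa [h10] at h9
    have hfin : L ≤ ℓ := Nat.le_of_dvd hℓp.pos (Int.natCast_dvd_natCast.mp hLℓ)
    rw [hL, pow_two] at hfin
    have h11 : ℓ * ℓ ≤ ℓ * 1 := by simpa using hfin
    have h12 := Nat.le_of_mul_le_mul_left h11 hℓp.pos
    omega
end

section
/- Let r, s ≥ 3 be integers and let μ, ν be coprime positive integers such that μ·r is odd or ν·s is odd. Then the polynomial P₁(x,y) = 2μ(r-2)·x² + 2ν(s-2)·y² + μ(4-r)·x + ν(4-s)·y is irreducible in ℤ[x,y]. -/
section P1Aux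

open Polynomial

lemma P1aux_qc2 {R : Type*} [Semiring R] (u v w : R) :
    (C u * X ^ 2 + C v * X + C w : Polynomial R).coeff 2 = u := by
  simp [coeff_X_pow, coeff_C, coeff_X]

lemma P1aux_qc1 {R : Type*} [Semiring R] (u v w : R) :
    (C u * X ^ 2 + C v * X + C w : Polynomial R).coeff 1 = v := by
  simp [coeff_X_pow, coeff_C, coeff_X]

lemma P1aux_qc0 {R : Type*} [Semiring R] (u v w : R) :
    (C u * X ^ 2 + C v * X + C w : Polynomial R).coeff 0 = w := by
  simp [coeff_X_pow, coeff_C, coeff_X]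

lemma P1aux_lc1 {R : Type*} [Semiring R] (u v : R) :
    (C u * X + C v : Polynomial R).coeff 1 = u := by
  simp [coeff_C, coeff_X]

lemma P1aux_cc1 {R : Type*} [Semiring R] (v : R) : (C v : Polynomial R).coeff 1 = 0 := by
  simp [coeff_C]

theorem P1aux_Q_irr (r s μ ν : ℤ) (hr : 3 ≤ r) (hs : 3 ≤ s)
    (hμ : 0 < μ) (hν : 0 < ν) (hμν : IsCoprime μ ν)
    (hodd : Odd (μ * r) ∨ Odd (ν * s)) :
    Irreducible ((C (C (2 * μ * (r - 2)))) * X ^ 2 + (C (C (μ * (4 - r)))) * X +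
      C ((C (2 * ν * (s - 2))) * X ^ 2 + (C (ν * (4 - s))) * X) :
      Polynomial (Polynomial ℤ)) := by
  set k2 : ℤ := 2 * μ * (r - 2) with hk2def
  set k1 : ℤ := μ * (4 - r) with hk1def
  set l2 : ℤ := 2 * ν * (s - 2) with hl2def
  set l1 : ℤ := ν * (4 - s) with hl1def
  have hk2 : 0 < k2 := by nlinarith
  have hl2 : 0 < l2 := by nlinarith
  set D : Polynomial ℤ := C l2 * X ^ 2 + C l1 * X with hDdef
  have hDeq : D = C l2 * X ^ 2 + C l1 * X + C 0 := by rw [hDdef, C_0, add_zero]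
  set Q : Polynomial (Polynomial ℤ) := C (C k2) * X ^ 2 + C (C k1) * X + C D with hQdef
  have hCk2 : (C k2 : Polynomial ℤ) ≠ 0 := by simp [hk2.ne']
  have hQdeg : Q.natDegree = 2 := Polynomial.natDegree_quadratic hCk2
  have hQne : Q ≠ 0 := fun h => by simp [h] at hQdeg
  have hDdeg : D.natDegree = 2 := by
    rw [hDeq]; exact Polynomial.natDegree_quadratic (by simp [hl2.ne'])
  have hDne : D ≠ 0 := fun h => by simp [h] at hDdeg
  have hQ2 : Q.coeff 2 = C k2 := by rw [hQdef]; exact P1aux_qc2 _ _ _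
  have hQ1 : Q.coeff 1 = C k1 := by rw [hQdef]; exact P1aux_qc1 _ _ _
  have hQ0 : Q.coeff 0 = D := by rw [hQdef]; exact P1aux_qc0 _ _ _
  have hD2 : D.coeff 2 = l2 := by rw [hDeq]; exact P1aux_qc2 _ _ _
  have hD1 : D.coeff 1 = l1 := by rw [hDeq]; exact P1aux_qc1 _ _ _
  have hconst : ∀ c : ℤ, c ∣ k2 → c ∣ k1 → c ∣ l2 → c ∣ l1 → IsUnit c := by
    intro c h1 h2 h3 h4
    have hμr : c ∣ μ * r := by
      have h : μ * r = k2 + k1 := by rw [hk2def, hk1def]; ring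
      rw [h]; exact dvd_add h1 h2
    have hνs : c ∣ ν * s := by
      have h : ν * s = l2 + l1 := by rw [hl2def, hl1def]; ring
      rw [h]; exact dvd_add h3 h4
    have h4μ : c ∣ 4 * μ := by
      have h : 4 * μ = k2 + 2 * k1 := by rw [hk2def, hk1def]; ring
      rw [h]; exact dvd_add h1 (h2.mul_left 2)
    have h4ν : c ∣ 4 * ν := by
      have h : 4 * ν = l2 + 2 * l1 := by rw [hl2def, hl1def]; ring
      rw [h]; exact dvd_add h3 (h4.mul_left 2)
    obtain ⟨a, b, hab⟩ := hμν
    have hc4 : c ∣ 4 := by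
      have h : (4 : ℤ) = a * (4 * μ) + b * (4 * ν) := by linear_combination 4 * hab.symm
      rw [h]; exact dvd_add (h4μ.mul_left a) (h4ν.mul_left b)
    have oddd : ∀ m : ℤ, c ∣ m → Odd m → Odd c := by
      intro m hcm hm
      rcases Int.even_or_odd c with he | ho
      · exfalso; obtain ⟨d, rfl⟩ := hcm
        exact (Int.not_odd_iff_even.mpr (he.mul_right d)) hm
      · exact ho
    have hcodd : Odd c := by
      rcases hodd with h | h
      · exact oddd _ hμr h
      · exact oddd _ hνs h
    rw [Int.isUnit_iff_natAbs_eq]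
    have hna : c.natAbs ∣ 4 := Int.natAbs_dvd_natAbs.mpr hc4
    have hno : c.natAbs % 2 = 1 := Nat.odd_iff.mp (Int.natAbs_odd.mpr hcodd)
    have hle : c.natAbs ≤ 4 := Nat.le_of_dvd (by norm_num) hna
    set n := c.natAbs with hn
    interval_cases n <;> first | rfl | omega | (exfalso; revert hna; decide)
  have hconstF : ∀ F G : Polynomial (Polynomial ℤ), Q = F * G → F.natDegree = 0 → IsUnit F := by
    intro F G hFG h0
    obtain ⟨u, rfl⟩ := Polynomial.natDegree_eq_zero.mp h0
    have hdvd : ∀ n : ℕ, u ∣ Q.coeff n := by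
      intro n; rw [hFG, Polynomial.coeff_C_mul]; exact Dvd.intro _ rfl
    have hc2 : u ∣ C k2 := hQ2 ▸ hdvd 2
    have hc1 : u ∣ C k1 := hQ1 ▸ hdvd 1
    have hc0 : u ∣ D := hQ0 ▸ hdvd 0
    obtain ⟨w, hw⟩ := id hc2
    have hwne : w ≠ 0 := fun h => by rw [h, mul_zero] at hw; exact hCk2 hw
    have hune : u ≠ 0 := fun h => by rw [h, zero_mul] at hw; exact hCk2 hw
    have hud : u.natDegree = 0 := by
      have h := Polynomial.natDegree_mul hune hwne
      rw [← hw] at h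
      simp at h
      omega
    obtain ⟨c, rfl⟩ := Polynomial.natDegree_eq_zero.mp hud
    have hck2 : c ∣ k2 := by
      have h := (Polynomial.C_dvd_iff_dvd_coeff _ _).mp hc2 0
      rwa [Polynomial.coeff_C_zero] at h
    have hck1 : c ∣ k1 := by
      have h := (Polynomial.C_dvd_iff_dvd_coeff _ _).mp hc1 0
      rwa [Polynomial.coeff_C_zero] at h
    have hcl2 : c ∣ l2 := by
      have h := (Polynomial.C_dvd_iff_dvd_coeff _ _).mp hc0 2
      rwa [hD2] at h
    have hcl1 : c ∣ l1 := by
      have h := (Polynomial.C_dvd_iff_dvd_coeff _ _).mp hc0 1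
      rwa [hD1] at h
    exact Polynomial.isUnit_C.mpr (Polynomial.isUnit_C.mpr (hconst c hck2 hck1 hcl2 hcl1))
  constructor
  · intro hu
    have := Polynomial.natDegree_eq_zero_of_isUnit hu
    omega
  intro F G hFG
  have hFne : F ≠ 0 := fun h => hQne (by rw [hFG, h, zero_mul])
  have hGne : G ≠ 0 := fun h => hQne (by rw [hFG, h, mul_zero])
  have hsum : F.natDegree + G.natDegree = 2 := by
    rw [← Polynomial.natDegree_mul hFne hGne, ← hFG, hQdeg]
  rcases Nat.lt_or_ge F.natDegree 1 with hF0 | hF1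
  · exact Or.inl (hconstF F G hFG (by omega))
  rcases Nat.lt_or_ge G.natDegree 1 with hG0 | hG1
  · exact Or.inr (hconstF G F (by rw [hFG, mul_comm]) (by omega))
  exfalso
  have hFdeg : F.natDegree = 1 := by omega
  have hGdeg : G.natDegree = 1 := by omega
  have hFeq := Polynomial.eq_X_add_C_of_natDegree_le_one (hFdeg.le)
  have hGeq := Polynomial.eq_X_add_C_of_natDegree_le_one (hGdeg.le)
  set a := F.coeff 1 with hadef
  set f0 := F.coeff 0 with hf0def
  set b := G.coeff 1 with hbdef
  set g0 := G.coeff 0 with hg0def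
  have hexp : Q = C (a * b) * X ^ 2 + C (a * g0 + f0 * b) * X + C (f0 * g0) := by
    rw [hFG, hFeq, hGeq]; simp only [C_mul, C_add]; ring
  have e2 : a * b = C k2 := by
    have h : Q.coeff 2 = a * b := by rw [hexp]; exact P1aux_qc2 _ _ _
    rw [← h, hQ2]
  have e1 : a * g0 + f0 * b = C k1 := by
    have h : Q.coeff 1 = a * g0 + f0 * b := by rw [hexp]; exact P1aux_qc1 _ _ _
    rw [← h, hQ1]
  have e0 : f0 * g0 = D := by
    have h : Q.coeff 0 = f0 * g0 := by rw [hexp]; exact P1aux_qc0 _ _ _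
    rw [← h, hQ0]
  have hane : a ≠ 0 := fun h => by rw [h, zero_mul] at e2; exact hCk2 e2.symm
  have hbne : b ≠ 0 := fun h => by rw [h, mul_zero] at e2; exact hCk2 e2.symm
  have hab0 : a.natDegree = 0 ∧ b.natDegree = 0 := by
    have h := Polynomial.natDegree_mul hane hbne
    rw [e2] at h; simp at h; omega
  obtain ⟨a1, ha1⟩ := Polynomial.natDegree_eq_zero.mp hab0.1
  obtain ⟨b1, hb1⟩ := Polynomial.natDegree_eq_zero.mp hab0.2
  have hab : a1 * b1 = k2 := by
    have h : (C (a1 * b1) : Polynomial ℤ) = C k2 := by rw [C_mul, ha1, hb1, e2]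
    exact C_injective h
  have hf0ne : f0 ≠ 0 := fun h => hDne (by rw [← e0, h, zero_mul])
  have hg0ne : g0 ≠ 0 := fun h => hDne (by rw [← e0, h, mul_zero])
  have hfg0 : f0.natDegree + g0.natDegree = 2 := by
    rw [← Polynomial.natDegree_mul hf0ne hg0ne, e0, hDdeg]
  rcases Nat.lt_or_ge f0.natDegree 1 with hd0 | hd1
  · obtain ⟨d, hd⟩ := Polynomial.natDegree_eq_zero.mp (by omega : f0.natDegree = 0)
    have h : a * g0 = C (k1 - d * b1) := by
      rw [C_sub, ← e1, ← hd, ← hb1, C_mul]; ring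
    have hgne2 : g0.natDegree = 2 := by omega
    have h2 := congrArg Polynomial.natDegree h
    rw [Polynomial.natDegree_mul hane hg0ne, hab0.1, hgne2, Polynomial.natDegree_C] at h2
    omega
  rcases Nat.lt_or_ge g0.natDegree 1 with he0 | he1
  · obtain ⟨d, hd⟩ := Polynomial.natDegree_eq_zero.mp (by omega : g0.natDegree = 0)
    have h : f0 * b = C (k1 - a1 * d) := by
      rw [C_sub, ← e1, ← hd, ← ha1, C_mul]; ring
    have hfne2 : f0.natDegree = 2 := by omega
    have h2 := congrArg Polynomial.natDegree h
    rw [Polynomial.natDegree_mul hf0ne hbne, hab0.2, hfne2, Polynomial.natDegree_C] at h2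
    omega
  have hf0deg : f0.natDegree = 1 := by omega
  have hg0deg : g0.natDegree = 1 := by omega
  have hf0eq := Polynomial.eq_X_add_C_of_natDegree_le_one (hf0deg.le)
  have hg0eq := Polynomial.eq_X_add_C_of_natDegree_le_one (hg0deg.le)
  set p1 := f0.coeff 1 with hp1def
  set q1 := g0.coeff 1 with hq1def
  set p0 := f0.coeff 0 with hp0def
  set q0 := g0.coeff 0 with hq0def
  have hpq : p1 * q1 = l2 := by
    have h : f0 * g0 = C (p1 * q1) * X ^ 2 + C (p1 * q0 + p0 * q1) * X + C (p0 * q0) := by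
      rw [hf0eq, hg0eq]; simp only [C_mul, C_add]; ring
    have h2 : (f0 * g0).coeff 2 = p1 * q1 := by rw [h]; exact P1aux_qc2 _ _ _
    rw [e0, hD2] at h2; exact h2.symm
  have hcross : a1 * q1 + p1 * b1 = 0 := by
    have h : C (a1 * q1 + p1 * b1) * X + C (a1 * q0 + p0 * b1) = C k1 := by
      rw [← e1, ← ha1, ← hb1, hf0eq, hg0eq]; simp only [C_mul, C_add]; ring
    have h1 := congrArg (fun p : Polynomial ℤ => p.coeff 1) h
    rw [P1aux_lc1, P1aux_cc1] at h1
    exact h1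
  have hprod : (a1 * q1) * (p1 * b1) = k2 * l2 := by rw [← hab, ← hpq]; ring
  have hsq : (a1 * q1) ^ 2 + k2 * l2 = 0 := by linear_combination (a1 * q1) * hcross - hprod
  nlinarith [sq_nonneg (a1 * q1), mul_pos hk2 hl2]

end P1Aux

open MvPolynomial

noncomputable def P1equiv : MvPolynomial (Fin 2) ℤ ≃+* Polynomial (Polynomial ℤ) :=
  (MvPolynomial.finSuccEquiv ℤ 1).toRingEquiv.trans
    (Polynomial.mapEquiv ((MvPolynomial.finSuccEquiv ℤ 0).toRingEquiv.trans
      (Polynomial.mapEquiv (MvPolynomial.isEmptyRingEquiv ℤ (Fin 0)))))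

theorem P1equiv_X0 : P1equiv (X 0) = Polynomial.X := by
  simp [P1equiv, Polynomial.mapEquiv, MvPolynomial.finSuccEquiv_X_zero, Polynomial.map_X]

theorem P1equiv_X1 : P1equiv (X 1) = Polynomial.C Polynomial.X := by
  have h1 : (MvPolynomial.finSuccEquiv ℤ 1) (X 1) = Polynomial.C (MvPolynomial.X 0) := by
    have := MvPolynomial.finSuccEquiv_X_succ (R := ℤ) (n := 1) (j := (0 : Fin 1))
    simpa using this
  simp [P1equiv, Polynomial.mapEquiv, h1, MvPolynomial.finSuccEquiv_X_zero]

theorem P1equiv_C (a : ℤ) : P1equiv (MvPolynomial.C a) = Polynomial.C (Polynomial.C a) := by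
  simp [P1equiv, Polynomial.mapEquiv]

/-- For integers r, s ≥ 3 and coprime positive integers μ, ν with
μ·r odd or ν·s odd, the polynomial
P₁(x,y) = 2μ(r-2)·x² + 2ν(s-2)·y² + μ(4-r)·x + ν(4-s)·y is irreducible in ℤ[x,y]. -/
theorem P1_irreducible (r s μ ν : ℤ) (hr : 3 ≤ r) (hs : 3 ≤ s)
    (hμ : 0 < μ) (hν : 0 < ν) (hμν : IsCoprime μ ν)
    (hodd : Odd (μ * r) ∨ Odd (ν * s)) :
    Irreducible ((C (2 * μ * (r - 2))) * X 0 ^ 2 + (C (2 * ν * (s - 2))) * X 1 ^ 2 +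
      (C (μ * (4 - r))) * X 0 + (C (ν * (4 - s))) * X 1 : MvPolynomial (Fin 2) ℤ) := by
  apply (MulEquiv.irreducible_iff P1equiv).mp
  have heq : P1equiv ((C (2 * μ * (r - 2))) * X 0 ^ 2 + (C (2 * ν * (s - 2))) * X 1 ^ 2 +
      (C (μ * (4 - r))) * X 0 + (C (ν * (4 - s))) * X 1 : MvPolynomial (Fin 2) ℤ) =
      (Polynomial.C (Polynomial.C (2 * μ * (r - 2)))) * Polynomial.X ^ 2 +
        (Polynomial.C (Polynomial.C (μ * (4 - r)))) * Polynomial.X +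
        Polynomial.C ((Polynomial.C (2 * ν * (s - 2))) * Polynomial.X ^ 2 +
          (Polynomial.C (ν * (4 - s))) * Polynomial.X) := by
    simp only [map_add, map_mul, map_pow, P1equiv_X0, P1equiv_X1, P1equiv_C,
      Polynomial.C_add, Polynomial.C_mul, Polynomial.C_pow]
    ring
  rw [heq]
  exact P1aux_Q_irr r s μ ν hr hs hμ hν hμν hodd
end

section
/- Let r, s ≥ 3 be integers and let μ, ν be coprime positive integers such that r is odd or ν is odd. Then the polynomial P₂(x,y) = 2μ(r-2)·x² + 2ν(s-2)·y² + μ(4-r)·x + νs·y + ν is irreducible in ℤ[x,y]. -/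
section Aux

open Polynomial

theorem aux_irred_P2 (α β γ δ ε : ℤ) (hα : α ≠ 0)
    (hpos : 0 < α * γ)
    (hcont : ∀ k : ℤ, k ∣ α → k ∣ β → k ∣ γ → k ∣ δ → k ∣ ε → IsUnit k) :
    Irreducible (C (C α) * X ^ 2 + C (C β) * X +
      C (C γ * X ^ 2 + C δ * X + C ε) : Polynomial (Polynomial ℤ)) := by
  set c : Polynomial ℤ := C γ * X ^ 2 + C δ * X + C ε with hc
  set Q : Polynomial (Polynomial ℤ) := C (C α) * X ^ 2 + C (C β) * X + C c with hQ
  have hCα : (C α : Polynomial ℤ) ≠ 0 := by simpa using hα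
  have hQdeg : Q.natDegree = 2 := natDegree_quadratic hCα
  have hQne : Q ≠ 0 := fun h => by simp [h] at hQdeg
  have hunit : ∀ h : Polynomial (Polynomial ℤ), h ∣ Q → h.natDegree = 0 → IsUnit h := by
    intro h hdvd hdeg
    obtain ⟨p, rfl⟩ : ∃ p, h = C p := ⟨h.coeff 0, (eq_C_of_natDegree_eq_zero hdeg)⟩
    have hco := (C_dvd_iff_dvd_coeff p Q).mp hdvd
    have h2 : p ∣ C α := by
      have := hco 2
      simp only [hQ, coeff_add, coeff_C_mul, coeff_X_pow, coeff_X, coeff_C] at this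
      norm_num at this; exact this
    have h1 : p ∣ C β := by
      have := hco 1
      simp only [hQ, coeff_add, coeff_C_mul, coeff_X_pow, coeff_X, coeff_C] at this
      norm_num at this; exact this
    have h0 : p ∣ c := by
      have := hco 0
      simp only [hQ, coeff_add, coeff_C_mul, coeff_X_pow, coeff_X, coeff_C] at this
      norm_num at this; exact this
    have hpdeg : p.natDegree = 0 :=
      Nat.le_zero.mp ((natDegree_le_of_dvd h2 hCα).trans_eq (natDegree_C α))
    obtain ⟨k, rfl⟩ : ∃ k, p = C k := ⟨p.coeff 0, (eq_C_of_natDegree_eq_zero hpdeg)⟩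
    have inner : ∀ q : Polynomial ℤ, C k ∣ q → ∀ i, k ∣ q.coeff i :=
      fun q hq i => (C_dvd_iff_dvd_coeff k q).mp hq i
    have hkα : k ∣ α := by simpa using inner _ h2 0
    have hkβ : k ∣ β := by simpa using inner _ h1 0
    have hkγ : k ∣ γ := by
      have := inner _ h0 2
      simp only [hc, coeff_add, coeff_C_mul, coeff_X_pow, coeff_X, coeff_C] at this
      norm_num at this; exact this
    have hkδ : k ∣ δ := by
      have := inner _ h0 1
      simp only [hc, coeff_add, coeff_C_mul, coeff_X_pow, coeff_X, coeff_C] at this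
      norm_num at this; exact this
    have hkε : k ∣ ε := by
      have := inner _ h0 0
      simp only [hc, coeff_add, coeff_C_mul, coeff_X_pow, coeff_X, coeff_C] at this
      norm_num at this; exact this
    exact (hcont k hkα hkβ hkγ hkδ hkε).map (C.comp C)
  constructor
  · intro hu
    have := natDegree_eq_zero_of_isUnit hu
    omega
  · intro f g hfg
    have hf0 : f ≠ 0 := fun h => hQne (by simp [hfg, h])
    have hg0 : g ≠ 0 := fun h => hQne (by simp [hfg, h])
    have hdeg : f.natDegree + g.natDegree = 2 := by
      rw [← natDegree_mul hf0 hg0, ← hfg, hQdeg]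
    rcases (by omega : f.natDegree = 0 ∨ g.natDegree = 0 ∨
        (f.natDegree = 1 ∧ g.natDegree = 1)) with h | h | ⟨h1, h2⟩
    · exact Or.inl (hunit f ⟨g, hfg⟩ h)
    · exact Or.inr (hunit g ⟨f, by rw [hfg]; ring⟩ h)
    · exfalso
      obtain ⟨f1, hf1, f0, hf⟩ := natDegree_eq_one.mp h1
      obtain ⟨g1, hg1, g0, hg⟩ := natDegree_eq_one.mp h2
      have hexp : f * g = C (f1 * g1) * X ^ 2 + C (f1 * g0 + f0 * g1) * X + C (f0 * g0) := by
        rw [← hf, ← hg]; simp only [map_mul, map_add]; ring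
      rw [hexp] at hfg
      have e2 : C α = f1 * g1 := by
        have := congrArg (fun p => coeff p 2) hfg
        simp only [hQ, coeff_add, coeff_C_mul, coeff_X_pow, coeff_X, coeff_C] at this
        norm_num at this; exact this
      have e1 : C β = f1 * g0 + f0 * g1 := by
        have := congrArg (fun p => coeff p 1) hfg
        simp only [hQ, coeff_add, coeff_C_mul, coeff_X_pow, coeff_X, coeff_C] at this
        norm_num at this; exact this
      have e0 : c = f0 * g0 := by
        have := congrArg (fun p => coeff p 0) hfg
        simp only [hQ, coeff_add, coeff_C_mul, coeff_X_pow, coeff_X, coeff_C] at this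
        norm_num at this; exact this
      have hf1deg : f1.natDegree + g1.natDegree = 0 := by
        rw [← natDegree_mul hf1 hg1, ← e2, natDegree_C]
      obtain ⟨u, rfl⟩ : ∃ u, f1 = C u := ⟨f1.coeff 0, eq_C_of_natDegree_eq_zero (by omega)⟩
      obtain ⟨v, rfl⟩ : ∃ v, g1 = C v := ⟨g1.coeff 0, eq_C_of_natDegree_eq_zero (by omega)⟩
      set z : Polynomial ℤ := 2 * C v * f0 - C β with hz
      have e1' : C u * g0 = C β - C v * f0 := by linear_combination e1.symm
      have key : z ^ 2 = C β ^ 2 - 4 * C α * c := by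
        rw [e0, e2, hz]
        linear_combination (4 * C v * f0) * e1'
      have hrhs : C β ^ 2 - 4 * C α * c =
          C (-(4 * α * γ)) * X ^ 2 + C (-(4 * α * δ)) * X + C (β ^ 2 - 4 * α * ε) := by
        simp only [hc, map_neg, map_mul, map_sub, map_add, map_pow, map_ofNat]
        ring
      have hlc : (-(4 * α * γ) : ℤ) ≠ 0 := by
        intro h; apply hα; nlinarith
      have : leadingCoeff (z ^ 2) = -(4 * α * γ) := by
        rw [key, hrhs, leadingCoeff_quadratic hlc]
      rw [leadingCoeff_pow] at this
      nlinarith [sq_nonneg z.leadingCoeff, this]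

end Aux

open MvPolynomial

noncomputable def e2P2 : MvPolynomial (Fin 2) ℤ ≃ₐ[ℤ] Polynomial (Polynomial ℤ) :=
  (MvPolynomial.finSuccEquiv ℤ 1).trans (Polynomial.mapAlgEquiv
    ((MvPolynomial.finSuccEquiv ℤ 0).trans
      (Polynomial.mapAlgEquiv (MvPolynomial.isEmptyAlgEquiv ℤ (Fin 0)))))

lemma e2P2_C (a : ℤ) : e2P2 (C a) = Polynomial.C (Polynomial.C a) := by
  simp [e2P2, Polynomial.mapAlgEquiv]

lemma e2P2_X0 : e2P2 (X 0) = Polynomial.X := by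
  simp [e2P2, Polynomial.mapAlgEquiv, finSuccEquiv_X_zero, Polynomial.map_X]

lemma e2P2_X1 : e2P2 (X 1) = Polynomial.C Polynomial.X := by
  show (Polynomial.mapAlgEquiv ((MvPolynomial.finSuccEquiv ℤ 0).trans
      (Polynomial.mapAlgEquiv (MvPolynomial.isEmptyAlgEquiv ℤ (Fin 0)))))
      ((MvPolynomial.finSuccEquiv ℤ 1) (X (Fin.succ 0))) = Polynomial.C Polynomial.X
  rw [finSuccEquiv_X_succ]
  simp [Polynomial.mapAlgEquiv, Polynomial.map_C, finSuccEquiv_X_zero]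

/-- For integers r, s ≥ 3 and coprime positive integers μ, ν with
r odd or ν odd, the polynomial
P₂(x,y) = 2μ(r-2)·x² + 2ν(s-2)·y² + μ(4-r)·x + νs·y + ν is irreducible in ℤ[x,y]. -/
theorem P2_irreducible (r s μ ν : ℤ) (hr : 3 ≤ r) (hs : 3 ≤ s)
    (hμ : 0 < μ) (hν : 0 < ν) (hμν : IsCoprime μ ν)
    (hodd : Odd r ∨ Odd ν) :
    Irreducible ((C (2 * μ * (r - 2))) * X 0 ^ 2 + (C (2 * ν * (s - 2))) * X 1 ^ 2 +
      (C (μ * (4 - r))) * X 0 + (C (ν * s)) * X 1 + (C ν) : MvPolynomial (Fin 2) ℤ) := by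
  have ha : (0:ℤ) < 2 * μ * (r - 2) := by nlinarith
  have hb : (0:ℤ) < 2 * ν * (s - 2) := by nlinarith
  have hα : (2 * μ * (r - 2) : ℤ) ≠ 0 := ha.ne'
  have hpos : (0 : ℤ) < (2 * μ * (r - 2)) * (2 * ν * (s - 2)) := mul_pos ha hb
  have hcont : ∀ k : ℤ, k ∣ 2 * μ * (r - 2) → k ∣ μ * (4 - r) → k ∣ 2 * ν * (s - 2) →
      k ∣ ν * s → k ∣ ν → IsUnit k := by
    intro k h1 h2 h3 h4 h5
    have hkμ : IsCoprime k μ := hμν.symm.of_isCoprime_of_dvd_left h5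
    have h6 : k ∣ 4 - r := hkμ.dvd_of_dvd_mul_left h2
    have h7 : k ∣ 2 * (r - 2) := by
      refine hkμ.dvd_of_dvd_mul_left ?_
      exact (show 2 * μ * (r - 2) = μ * (2 * (r - 2)) by ring) ▸ h1
    have h8 : k ∣ 4 :=
      (show (4 : ℤ) = 2 * (r - 2) + 2 * (4 - r) by ring) ▸ dvd_add h7 (h6.mul_left 2)
    have hoddk : Odd k := by
      rcases hodd with ho | ho
      · have h4r : Odd (4 - r) := by
          rcases ho with ⟨m, hm⟩; exact ⟨1 - m, by omega⟩
        obtain ⟨c, hc⟩ := h6; rw [hc] at h4r; exact (Int.odd_mul.mp h4r).1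
      · obtain ⟨c, hc⟩ := h5; rw [hc] at ho; exact (Int.odd_mul.mp ho).1
    obtain ⟨m, hm⟩ := hoddk
    have hk2 : IsCoprime k 2 := ⟨1, -m, by omega⟩
    exact (hk2.mul_right hk2).isUnit_of_dvd' (dvd_refl k) (by norm_num [h8] : k ∣ 2 * 2)
  suffices h : Irreducible (e2P2 ((C (2 * μ * (r - 2))) * X 0 ^ 2 + (C (2 * ν * (s - 2))) * X 1 ^ 2 +
      (C (μ * (4 - r))) * X 0 + (C (ν * s)) * X 1 + (C ν) : MvPolynomial (Fin 2) ℤ)) from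
    (MulEquiv.irreducible_iff e2P2).mp h
  have him : e2P2 ((C (2 * μ * (r - 2))) * X 0 ^ 2 + (C (2 * ν * (s - 2))) * X 1 ^ 2 +
      (C (μ * (4 - r))) * X 0 + (C (ν * s)) * X 1 + (C ν) : MvPolynomial (Fin 2) ℤ) =
      (Polynomial.C (Polynomial.C (2 * μ * (r - 2))) * Polynomial.X ^ 2 +
        Polynomial.C (Polynomial.C (μ * (4 - r))) * Polynomial.X +
        Polynomial.C (Polynomial.C (2 * ν * (s - 2)) * Polynomial.X ^ 2 +
          Polynomial.C (ν * s) * Polynomial.X + Polynomial.C ν)) := by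
    simp only [map_add, map_mul, map_pow, e2P2_C, e2P2_X0, e2P2_X1]
    ring
  rw [him]
  exact aux_irred_P2 _ _ _ _ _ hα hpos hcont
end

section
/- Let r, s ≥ 3 be integers and let μ, ν be coprime positive integers such that r is odd, or s is odd, or μ + ν is odd. Then the polynomial P₃(x,y) = 2μ(r-2)·x² + 2ν(s-2)·y² + μr·x + νs·y + (μ + ν) is irreducible in ℤ[x,y]. -/
open Polynomial in
private lemma coeff_quad {R : Type*} [CommSemiring R] (p q r : R) :
    ((C p * X ^ 2 + C q * X + C r : R[X]).coeff 2 = p) ∧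
    ((C p * X ^ 2 + C q * X + C r : R[X]).coeff 1 = q) ∧
    ((C p * X ^ 2 + C q * X + C r : R[X]).coeff 0 = r) := by
  refine ⟨?_, ?_, ?_⟩ <;>
  · rw [coeff_add, coeff_add, coeff_C_mul, coeff_C_mul, coeff_X_pow, coeff_X, coeff_C]
    norm_num

open Polynomial in
private lemma coeff_lin {R : Type*} [CommSemiring R] (p q : R) :
    ((C p * X + C q : R[X]).coeff 1 = p) ∧ ((C p * X + C q : R[X]).coeff 0 = q) := by
  constructor <;>
  · rw [coeff_add, coeff_C_mul, coeff_X, coeff_C]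
    norm_num

open Polynomial in
theorem key_irred (A B a b c : ℤ) (hA : A ≠ 0) (hB : B ≠ 0) (hAB : 0 < A * B)
    (hcont : ∀ d : ℤ, d ∣ A → d ∣ B → d ∣ a → d ∣ b → d ∣ c → IsUnit d) :
    Irreducible (C (C A) * X ^ 2 + C (C a) * X +
      C (C B * X ^ 2 + C b * X + C c) : Polynomial (Polynomial ℤ)) := by
  set c' : Polynomial ℤ := C B * X ^ 2 + C b * X + C c with hc'
  have hCA : (C A : Polynomial ℤ) ≠ 0 := by simpa using hA
  have hc'deg : c'.natDegree = 2 := natDegree_quadratic hB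
  have hc'ne : c' ≠ 0 := fun h => by simp [h] at hc'deg
  set Q : Polynomial (Polynomial ℤ) := C (C A) * X ^ 2 + C (C a) * X + C c' with hQ
  have hQdeg : Q.natDegree = 2 := natDegree_quadratic hCA
  have hQne : Q ≠ 0 := fun h => by simp [h] at hQdeg
  have hco2 : Q.coeff 2 = C A := (coeff_quad _ _ _).1
  have hco1 : Q.coeff 1 = C a := (coeff_quad _ _ _).2.1
  have hco0 : Q.coeff 0 = c' := (coeff_quad _ _ _).2.2
  constructor
  · intro h
    have := natDegree_eq_zero_of_isUnit h
    omega
  intro f g hfg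
  have hf0 : f ≠ 0 := fun h => hQne (by simp [hfg, h])
  have hg0 : g ≠ 0 := fun h => hQne (by simp [hfg, h])
  have hdeg : f.natDegree + g.natDegree = 2 := by
    rw [← natDegree_mul hf0 hg0, ← hfg, hQdeg]
  -- constant factor case
  have const_case : ∀ u v : Polynomial (Polynomial ℤ), Q = u * v → u.natDegree = 0 →
      IsUnit u := by
    intro u v huv hu
    obtain ⟨d, hd⟩ := natDegree_eq_zero.mp hu
    have hdvd : ∀ i, d ∣ Q.coeff i := by
      rw [← hd] at huv
      exact (C_dvd_iff_dvd_coeff d Q).mp ⟨v, huv⟩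
    have h2 : d ∣ C A := hco2 ▸ hdvd 2
    have h1 : d ∣ C a := hco1 ▸ hdvd 1
    have h0 : d ∣ c' := hco0 ▸ hdvd 0
    obtain ⟨e, he⟩ := h2
    have hdne : d ≠ 0 := by rintro rfl; rw [zero_mul] at he; exact hCA he
    have hene : e ≠ 0 := by rintro rfl; rw [mul_zero] at he; exact hCA he
    have hd0 : d.natDegree = 0 := by
      have := natDegree_mul hdne hene
      rw [← he, natDegree_C] at this
      omega
    obtain ⟨d₀, hd₀⟩ := natDegree_eq_zero.mp hd0
    have h2' : (C d₀ : Polynomial ℤ) ∣ C A := hd₀ ▸ ⟨e, he⟩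
    rw [← hd₀] at h1 h0
    have hdA : d₀ ∣ A := by simpa using (C_dvd_iff_dvd_coeff d₀ (C A)).mp h2' 0
    have hda : d₀ ∣ a := by simpa using (C_dvd_iff_dvd_coeff d₀ (C a)).mp h1 0
    have hdB : d₀ ∣ B := by
      have := (C_dvd_iff_dvd_coeff d₀ c').mp h0 2
      rwa [hc', (coeff_quad B b c).1] at this
    have hdb : d₀ ∣ b := by
      have := (C_dvd_iff_dvd_coeff d₀ c').mp h0 1
      rwa [hc', (coeff_quad B b c).2.1] at this
    have hdc : d₀ ∣ c := by
      have := (C_dvd_iff_dvd_coeff d₀ c').mp h0 0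
      rwa [hc', (coeff_quad B b c).2.2] at this
    have : IsUnit d₀ := hcont d₀ hdA hdB hda hdb hdc
    rw [← hd, ← hd₀]
    exact isUnit_C.mpr (isUnit_C.mpr this)
  rcases (by omega : f.natDegree = 0 ∨ g.natDegree = 0 ∨
      (f.natDegree = 1 ∧ g.natDegree = 1)) with h | h | ⟨hf1, hg1⟩
  · exact Or.inl (const_case f g hfg h)
  · exact Or.inr (const_case g f (by rw [hfg, mul_comm]) h)
  -- linear × linear case
  exfalso
  obtain ⟨f1, f0, hf⟩ := exists_eq_X_add_C_of_natDegree_le_one (le_of_eq hf1)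
  obtain ⟨g1, g0, hg⟩ := exists_eq_X_add_C_of_natDegree_le_one (le_of_eq hg1)
  have hexp : f * g = C (f1 * g1) * X ^ 2 + C (f1 * g0 + f0 * g1) * X + C (f0 * g0) := by
    rw [hf, hg]; simp only [map_mul, map_add]; ring
  rw [hexp] at hfg
  have e2 : C A = f1 * g1 := by
    have h := congrArg (fun p : Polynomial (Polynomial ℤ) => p.coeff 2) hfg
    rwa [hco2, (coeff_quad (f1 * g1) (f1 * g0 + f0 * g1) (f0 * g0)).1] at h
  have e1 : C a = f1 * g0 + f0 * g1 := by
    have h := congrArg (fun p : Polynomial (Polynomial ℤ) => p.coeff 1) hfg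
    rwa [hco1, (coeff_quad (f1 * g1) (f1 * g0 + f0 * g1) (f0 * g0)).2.1] at h
  have e0 : c' = f0 * g0 := by
    have h := congrArg (fun p : Polynomial (Polynomial ℤ) => p.coeff 0) hfg
    rwa [hco0, (coeff_quad (f1 * g1) (f1 * g0 + f0 * g1) (f0 * g0)).2.2] at h
  have hf1ne : f1 ≠ 0 := by
    rintro rfl; rw [map_zero, zero_mul, zero_add] at hf
    rw [hf, natDegree_C] at hf1; omega
  have hg1ne : g1 ≠ 0 := by
    rintro rfl; rw [map_zero, zero_mul, zero_add] at hg
    rw [hg, natDegree_C] at hg1; omega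
  have hd10 : f1.natDegree = 0 ∧ g1.natDegree = 0 := by
    have := natDegree_mul hf1ne hg1ne
    rw [← e2, natDegree_C] at this
    omega
  obtain ⟨α, hα⟩ := natDegree_eq_zero.mp hd10.1
  obtain ⟨α', hα'⟩ := natDegree_eq_zero.mp hd10.2
  have hαA : α * α' = A := by
    have : (C (α * α') : Polynomial ℤ) = C A := by rw [map_mul, hα, hα', ← e2]
    exact C_injective this
  have hαne : α ≠ 0 := fun h => hf1ne (by rw [← hα, h, map_zero])
  have hα'ne : α' ≠ 0 := fun h => hg1ne (by rw [← hα', h, map_zero])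
  have hf0ne : f0 ≠ 0 := fun h => by rw [h, zero_mul] at e0; exact hc'ne e0
  have hg0ne : g0 ≠ 0 := fun h => by rw [h, mul_zero] at e0; exact hc'ne e0
  have hd00 : f0.natDegree + g0.natDegree = 2 := by
    have := natDegree_mul hf0ne hg0ne
    rw [← e0, hc'deg] at this
    omega
  rcases (by omega : (f0.natDegree = 1 ∧ g0.natDegree = 1) ∨ f0.natDegree ≤ 0 ∨
      g0.natDegree ≤ 0) with ⟨hf01, hg01⟩ | h | h
  · -- both linear: sign contradiction
    obtain ⟨β, γ, hβ⟩ := exists_eq_X_add_C_of_natDegree_le_one (le_of_eq hf01)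
    obtain ⟨β', γ', hβ'⟩ := exists_eq_X_add_C_of_natDegree_le_one (le_of_eq hg01)
    have eB : β * β' = B := by
      have h1 : c' = C (β * β') * X ^ 2 + C (β * γ' + γ * β') * X + C (γ * γ') := by
        rw [e0, hβ, hβ']; simp only [map_mul, map_add]; ring
      have h := congrArg (fun p : Polynomial ℤ => p.coeff 2) h1
      rw [hc', (coeff_quad B b c).1,
        (coeff_quad (β * β') (β * γ' + γ * β') (γ * γ')).1] at h
      exact h.symm
    have emid : α * β' + β * α' = 0 := by
      have h1 : (C a : Polynomial ℤ) = C (α * β' + β * α') * X + C (α * γ' + γ * α') := by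
        rw [e1, ← hα, ← hα', hβ, hβ']; simp only [map_mul, map_add]; ring
      have h := congrArg (fun p : Polynomial ℤ => p.coeff 1) h1
      rw [(coeff_lin (α * β' + β * α') (α * γ' + γ * α')).1, coeff_C] at h
      norm_num at h
      linarith
    have hkey : A * B = -((β * α') ^ 2) := by
      have h1 : α * β' = -(β * α') := by linarith
      calc A * B = (α * α') * (β * β') := by rw [hαA, eB]
        _ = (α * β') * (β * α') := by ring
        _ = -((β * α') ^ 2) := by rw [h1]; ring
    nlinarith [sq_nonneg (β * α')]
  · -- f0 constant
    obtain ⟨γ, hγ⟩ := natDegree_eq_zero.mp (Nat.le_zero.mp h)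
    have hmul : g0 * f1 = C a - f0 * g1 := by rw [e1]; ring
    rw [← hγ, ← hα, ← hα'] at hmul
    have hCαne : (C α : Polynomial ℤ) ≠ 0 := by simpa using hαne
    have hdeg' : g0.natDegree = 0 := by
      have h1 : (g0 * C α).natDegree = 0 := by
        rw [hmul]
        have : (C a : Polynomial ℤ) - C γ * C α' = C (a - γ * α') := by
          rw [map_sub, map_mul]
        rw [this, natDegree_C]
      have h2 := natDegree_mul hg0ne hCαne
      rw [h1, natDegree_C] at h2
      omega
    omega
  · -- g0 constant
    obtain ⟨γ, hγ⟩ := natDegree_eq_zero.mp (Nat.le_zero.mp h)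
    have hmul : f0 * g1 = C a - f1 * g0 := by rw [e1]; ring
    rw [← hγ, ← hα, ← hα'] at hmul
    have hCα'ne : (C α' : Polynomial ℤ) ≠ 0 := by simpa using hα'ne
    have hdeg' : f0.natDegree = 0 := by
      have h1 : (f0 * C α').natDegree = 0 := by
        rw [hmul]
        have : (C a : Polynomial ℤ) - C α * C γ = C (a - α * γ) := by
          rw [map_sub, map_mul]
        rw [this, natDegree_C]
      have h2 := natDegree_mul hf0ne hCα'ne
      rw [h1, natDegree_C] at h2
      omega
    omega

open MvPolynomial

/-- For integers r, s ≥ 3 and coprime positive integers μ, ν with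
r odd, or s odd, or μ + ν odd, the polynomial
P₃(x,y) = 2μ(r-2)·x² + 2ν(s-2)·y² + μr·x + νs·y + (μ+ν) is irreducible in ℤ[x,y]. -/
theorem P3_irreducible (r s μ ν : ℤ) (hr : 3 ≤ r) (hs : 3 ≤ s)
    (hμ : 0 < μ) (hν : 0 < ν) (hμν : IsCoprime μ ν)
    (hodd : Odd r ∨ Odd s ∨ Odd (μ + ν)) :
    Irreducible ((C (2 * μ * (r - 2))) * X 0 ^ 2 + (C (2 * ν * (s - 2))) * X 1 ^ 2 +
      (C (μ * r)) * X 0 + (C (ν * s)) * X 1 + (C (μ + ν)) : MvPolynomial (Fin 2) ℤ) := by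
  -- content condition
  have hcont : ∀ d : ℤ, d ∣ 2 * μ * (r - 2) → d ∣ 2 * ν * (s - 2) → d ∣ μ * r →
      d ∣ ν * s → d ∣ μ + ν → IsUnit d := by
    intro d h1 h2 h3 h4 h5
    have h4μ : d ∣ 4 * μ := by
      have := dvd_sub (h3.mul_left 2) h1
      rwa [show 2 * (μ * r) - 2 * μ * (r - 2) = 4 * μ by ring] at this
    have h4ν : d ∣ 4 * ν := by
      have := dvd_sub (h4.mul_left 2) h2
      rwa [show 2 * (ν * s) - 2 * ν * (s - 2) = 4 * ν by ring] at this
    rcases hodd with ⟨k, hk⟩ | ⟨k, hk⟩ | ⟨k, hk⟩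
    · have hdμ : d ∣ μ := by
        have hμeq : μ = (-(k * k + k)) * (4 * μ) + r * (μ * r) := by rw [hk]; ring
        rw [hμeq]
        exact dvd_add (h4μ.mul_left _) (h3.mul_left r)
      have hdν : d ∣ ν := by
        have := dvd_sub h5 hdμ
        rwa [show μ + ν - μ = ν by ring] at this
      exact hμν.isUnit_of_dvd' hdμ hdν
    · have hdν : d ∣ ν := by
        have hνeq : ν = (-(k * k + k)) * (4 * ν) + s * (ν * s) := by rw [hk]; ring
        rw [hνeq]
        exact dvd_add (h4ν.mul_left _) (h4.mul_left s)
      have hdμ : d ∣ μ := by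
        have := dvd_sub h5 hdν
        rwa [show μ + ν - ν = μ by ring] at this
      exact hμν.isUnit_of_dvd' hdμ hdν
    · obtain ⟨u, v, huv⟩ := hμν
      have hd4 : d ∣ 4 := by
        have h44 : (4 : ℤ) = u * (4 * μ) + v * (4 * ν) := by
          have : u * (4 * μ) + v * (4 * ν) = 4 * (u * μ + v * ν) := by ring
          rw [this, huv, mul_one]
        rw [h44]
        exact dvd_add (h4μ.mul_left u) (h4ν.mul_left v)
      have hcop : IsCoprime (4 : ℤ) (μ + ν) :=
        ⟨-(k * k + k), μ + ν, by rw [hk]; ring⟩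
      exact hcop.isUnit_of_dvd' hd4 h5
  -- transfer to ℤ[y][x]
  let e1 : MvPolynomial (Fin 1) ℤ ≃ₐ[ℤ] Polynomial ℤ :=
    (MvPolynomial.finSuccEquiv ℤ 0).trans
      (Polynomial.mapAlgEquiv (MvPolynomial.isEmptyAlgEquiv ℤ (Fin 0)))
  let e : MvPolynomial (Fin 2) ℤ ≃ₐ[ℤ] Polynomial (Polynomial ℤ) :=
    (MvPolynomial.finSuccEquiv ℤ 1).trans (Polynomial.mapAlgEquiv e1)
  have hgen : ∀ A B a b c : ℤ, e ((C A) * X 0 ^ 2 + (C B) * X 1 ^ 2 +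
      (C a) * X 0 + (C b) * X 1 + (C c)) =
      Polynomial.C (Polynomial.C A) * Polynomial.X ^ 2 +
      Polynomial.C (Polynomial.C a) * Polynomial.X +
      Polynomial.C (Polynomial.C B * Polynomial.X ^ 2 +
        Polynomial.C b * Polynomial.X + Polynomial.C c) := by
    intro A B a b c
    have h1 : (X 1 : MvPolynomial (Fin 2) ℤ) = X (Fin.succ 0) := rfl
    simp [e, e1, h1, map_add, map_mul, map_pow, MvPolynomial.finSuccEquiv_X_zero,
      MvPolynomial.finSuccEquiv_X_succ, Polynomial.mapAlgEquiv, algebraMap_eq]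
    ring
  have hP := hgen (2 * μ * (r - 2)) (2 * ν * (s - 2)) (μ * r) (ν * s) (μ + ν)
  have hApos : 0 < 2 * μ * (r - 2) := by nlinarith
  have hBpos : 0 < 2 * ν * (s - 2) := by nlinarith
  have hirr := key_irred (2 * μ * (r - 2)) (2 * ν * (s - 2)) (μ * r) (ν * s) (μ + ν)
    (ne_of_gt hApos) (ne_of_gt hBpos) (by positivity) hcont
  rw [← hP] at hirr
  exact (MulEquiv.irreducible_iff e).mp hirr
end

section
/- Let r, s ≥ 3 be integers and let μ, ν be coprime positive integers. Then the greatest common divisor (as integers, taking absolute values) satisfies gcd(2μ(r-2), 2ν(s-2), μr, νs, μ+ν) = gcd(4, r, s, μ+ν). -/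
/-- For integers r, s ≥ 3 and coprime positive integers μ, ν,
gcd(2μ(r-2), 2ν(s-2), μr, νs, μ+ν) = gcd(4, r, s, μ+ν). -/
theorem gcd_coeffs_P3 (r s μ ν : ℤ) (hr : 3 ≤ r) (hs : 3 ≤ s)
    (hμ : 0 < μ) (hν : 0 < ν) (hμν : IsCoprime μ ν) :
    gcd (2 * μ * (r - 2)) (gcd (2 * ν * (s - 2)) (gcd (μ * r) (gcd (ν * s) (μ + ν)))) =
      gcd 4 (gcd r (gcd s (μ + ν))) := by
  obtain ⟨a, b, hab⟩ := hμν
  have gnn : ∀ x y : ℤ, 0 ≤ gcd x y := fun x y => by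
    rw [← Int.coe_gcd]; exact Int.natCast_nonneg _
  apply Int.dvd_antisymm (gnn _ _) (gnn _ _)
  · set D := gcd (2 * μ * (r - 2)) (gcd (2 * ν * (s - 2)) (gcd (μ * r) (gcd (ν * s) (μ + ν))))
      with hD
    have h1 : D ∣ 2 * μ * (r - 2) := gcd_dvd_left _ _
    have h2 : D ∣ 2 * ν * (s - 2) := (gcd_dvd_right _ _).trans (gcd_dvd_left _ _)
    have h3 : D ∣ μ * r := (gcd_dvd_right _ _).trans ((gcd_dvd_right _ _).trans (gcd_dvd_left _ _))
    have h4 : D ∣ ν * s := (gcd_dvd_right _ _).trans ((gcd_dvd_right _ _).trans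
      ((gcd_dvd_right _ _).trans (gcd_dvd_left _ _)))
    have h5 : D ∣ μ + ν := (gcd_dvd_right _ _).trans ((gcd_dvd_right _ _).trans
      ((gcd_dvd_right _ _).trans (gcd_dvd_right _ _)))
    have h4μ : D ∣ 4 * μ := by
      have : 4 * μ = 2 * (μ * r) - 2 * μ * (r - 2) := by ring
      rw [this]; exact dvd_sub (h3.mul_left 2) h1
    have h4ν : D ∣ 4 * ν := by
      have : 4 * ν = 2 * (ν * s) - 2 * ν * (s - 2) := by ring
      rw [this]; exact dvd_sub (h4.mul_left 2) h2
    have hνr : D ∣ ν * r := by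
      have : ν * r = (μ + ν) * r - μ * r := by ring
      rw [this]; exact dvd_sub (h5.mul_right r) h3
    have hμs : D ∣ μ * s := by
      have : μ * s = (μ + ν) * s - ν * s := by ring
      rw [this]; exact dvd_sub (h5.mul_right s) h4
    have hfour : D ∣ 4 := by
      have : (4 : ℤ) = a * (4 * μ) + b * (4 * ν) := by linear_combination (-4) * hab
      rw [this]; exact dvd_add (h4μ.mul_left a) (h4ν.mul_left b)
    have hrr : D ∣ r := by
      have : r = a * (μ * r) + b * (ν * r) := by linear_combination (-r) * hab
      rw [this]; exact dvd_add (h3.mul_left a) (hνr.mul_left b)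
    have hss : D ∣ s := by
      have : s = a * (μ * s) + b * (ν * s) := by linear_combination (-s) * hab
      rw [this]; exact dvd_add (hμs.mul_left a) (h4.mul_left b)
    exact dvd_gcd hfour (dvd_gcd hrr (dvd_gcd hss h5))
  · set G := gcd 4 (gcd r (gcd s (μ + ν))) with hG
    have h4 : G ∣ 4 := gcd_dvd_left _ _
    have hrr : G ∣ r := (gcd_dvd_right _ _).trans (gcd_dvd_left _ _)
    have hss : G ∣ s := (gcd_dvd_right _ _).trans ((gcd_dvd_right _ _).trans (gcd_dvd_left _ _))
    have h5 : G ∣ μ + ν := (gcd_dvd_right _ _).trans ((gcd_dvd_right _ _).trans (gcd_dvd_right _ _))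
    refine dvd_gcd ?_ (dvd_gcd ?_ (dvd_gcd ?_ (dvd_gcd ?_ h5)))
    · have : 2 * μ * (r - 2) = 2 * μ * r - μ * 4 := by ring
      rw [this]; exact dvd_sub ((hrr.mul_left (2 * μ))) (h4.mul_left μ)
    · have : 2 * ν * (s - 2) = 2 * ν * s - ν * 4 := by ring
      rw [this]; exact dvd_sub ((hss.mul_left (2 * ν))) (h4.mul_left ν)
    · exact hrr.mul_left μ
    · exact hss.mul_left ν
end
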